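/- Let G be an n-vertex graph with a t-layering V1 ⊔ … ⊔ Vt of degree k−1. Let α be a k-coloring of G, let 1 ≤ i ≤ t, let K be a Kempe chain of the restriction of α to G_i, and let γ be the coloring of G_i obtained from α restricted to G_i by performing the Kempe change on K in G_i. Then there exists a k-coloring β of G that is Kempe equivalent to α up to n²·(2k)^t Kempe changes and whose restriction to G_i equals γ. -/

import Mathlib

/-
Lift the Kempe change down the layers: a Kempe change in `G_{j+1}` is simulated in `G_j`, then
in `G_{j-1}`, and so on down to `G_1 = G`. To simulate a change of the `a`/`b`-chain `K` of
`G_{j+1}` inside `G_j`, first give a third color to every vertex `w ∈ V_j` colored `a` or `b`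
that is adjacent to `K` and has another `a`/`b`-neighbour outside `K`: such a `w` has at most
`k - 1` neighbours, two of them with the same color, so a free color exists and the recoloring
is a Kempe change on the single vertex `w`. Afterwards the `a`/`b`-chain of `K` in `G_j` meets
`G_{j+1}` exactly in `K`, and swapping it performs the required change. A vertex of `V_j`
changes color at most twice per simulated change, and only when one of its at most `k - 1`
neighbours in `G_{j+1}` changes color. So if every vertex changes color at most `M` times in
`G_{j+1}`, it changes at most `2kM` times in `G_j`; overall every vertex changes at most
`(2k)^t` times, and the number of Kempe changes is at most `n (2k)^t`.
-/

open SimpleGraph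

/-- A proper coloring of `G` with colors in `C`. -/
def IsProperColoring {V C : Type*} (G : SimpleGraph V) (α : V → C) : Prop :=
  ∀ ⦃u v : V⦄, G.Adj u v → α u ≠ α v

/-- `u` lies in the Kempe chain of `v` for the colors `a`, `b`, computed in the
subgraph of `G` induced by the vertex set `S`. -/
def InKempeChainOn {V C : Type*} (G : SimpleGraph V) (S : Set V) (α : V → C)
    (a b : C) (v u : V) : Prop :=
  Relation.ReflTransGen
    (fun x y => G.Adj x y ∧ x ∈ S ∧ y ∈ S ∧ (α x = a ∨ α x = b) ∧ (α y = a ∨ α y = b)) v u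

/-- `u` lies in the Kempe chain of `v` for the colors `a`, `b` in `G`. -/
def InKempeChain {V C : Type*} (G : SimpleGraph V) (α : V → C) (a b : C) (v u : V) : Prop :=
  InKempeChainOn G Set.univ α a b v u

/-- `β` is obtained from `α` by performing a single Kempe change: the colors `a` and `b`
are swapped on the Kempe chain containing `v`. -/
def KempeStep {V C : Type*} [DecidableEq C] (G : SimpleGraph V) (α β : V → C) : Prop :=
  ∃ (a b : C) (v : V), (α v = a ∨ α v = b) ∧
    (∀ u, InKempeChain G α a b v u → β u = Equiv.swap a b (α u)) ∧
    (∀ u, ¬InKempeChain G α a b v u → β u = α u)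

/-- `α` and `β` are Kempe equivalent up to `N` Kempe changes, all intermediate
colorings satisfying the predicate `P`. -/
def KempeEquivIn {V C : Type*} [DecidableEq C] (G : SimpleGraph V) (P : (V → C) → Prop)
    (N : ℕ) (α β : V → C) : Prop :=
  ∃ (m : ℕ) (f : ℕ → V → C), m ≤ N ∧ f 0 = α ∧ f m = β ∧
    (∀ i ≤ m, P (f i)) ∧ ∀ i < m, KempeStep G (f i) (f (i + 1))

open Relation

variable {V C : Type*}

def ProperOn (G : SimpleGraph V) (A : Set V) (g : V → C) : Prop :=
  ∀ ⦃u⦄, u ∈ A → ∀ ⦃v⦄, v ∈ A → G.Adj u v → g u ≠ g v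

def KempeStepOn [DecidableEq C] (G : SimpleGraph V) (A : Set V) (g h : V → C) : Prop :=
  ∃ a b v, v ∈ A ∧ (g v = a ∨ g v = b) ∧
    (∀ u, InKempeChainOn G A g a b v u → h u = Equiv.swap a b (g u)) ∧
    (∀ u, ¬InKempeChainOn G A g a b v u → h u = g u)

def changes [DecidableEq C] (g h : V → C) (v : V) : ℕ :=
  if h v = g v then 0 else 1

/-- A sequence of Kempe changes in the subgraph induced by `A` from `g` to `h`, in which the
vertex `v` changes color exactly `c v` times. -/
inductive KempeWalk [DecidableEq C] (G : SimpleGraph V) (A : Set V) (g : V → C) :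
    (V → C) → (V → ℕ) → Prop
  | refl : KempeWalk G A g g 0
  | tail {h h' : V → C} {c : V → ℕ} :
      KempeWalk G A g h c → KempeStepOn G A h h' → KempeWalk G A g h' (c + changes h h')

theorem properOn_univ {G : SimpleGraph V} {g : V → C} :
    ProperOn G Set.univ g ↔ IsProperColoring G g :=
  ⟨fun hg _ _ huv => hg trivial trivial huv, fun hg _ _ _ _ huv => hg huv⟩

theorem eq_or_eq_of_pair {a b p q r : C} (hp : p = a ∨ p = b) (hq : q = a ∨ q = b)
    (hr : r = a ∨ r = b) (hpq : p ≠ q) : r = p ∨ r = q := by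
  rcases hp with rfl | rfl <;> rcases hq with rfl | rfl <;> rcases hr with rfl | rfl <;> simp_all

theorem swap_apply_eq_or_eq [DecidableEq C] {a b x : C} (hx : x = a ∨ x = b) :
    Equiv.swap a b x = a ∨ Equiv.swap a b x = b := by
  rcases hx with rfl | rfl <;> simp

section changes

variable [DecidableEq C] {g h : V → C} {v : V}

theorem changes_eq_zero : changes g h v = 0 ↔ h v = g v := by
  simp [changes]

theorem changes_le_one : changes g h v ≤ 1 := by
  unfold changes; split <;> omega

theorem changes_eq_one (hv : h v ≠ g v) : changes g h v = 1 := if_neg hv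

theorem le_two_mul_sum_changes {s : Finset V} {n : ℕ} (hn : n ≤ 2)
    (hs : n ≠ 0 → ∃ x ∈ s, h x ≠ g x) : n ≤ 2 * ∑ x ∈ s, changes g h x := by
  rcases Nat.eq_zero_or_pos n with rfl | hpos
  · exact Nat.zero_le _
  obtain ⟨x, hx, hgx⟩ := hs hpos.ne'
  have := (changes_eq_one hgx).symm.le.trans (Finset.single_le_sum (fun _ _ => Nat.zero_le _) hx)
  omega

end changes

namespace InKempeChainOn

variable {G : SimpleGraph V} {S S' : Set V} {g g' : V → C} {a b : C} {v u : V}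

theorem mem (hv : v ∈ S) (h : InKempeChainOn G S g a b v u) : u ∈ S := by
  induction h with
  | refl => exact hv
  | tail _ h _ => exact h.2.2.1

theorem color (hv : g v = a ∨ g v = b) (h : InKempeChainOn G S g a b v u) :
    g u = a ∨ g u = b := by
  induction h with
  | refl => exact hv
  | tail _ h _ => exact h.2.2.2.2

theorem mono (hS : S ⊆ S') (hg : Set.EqOn g g' S) (h : InKempeChainOn G S g a b v u) :
    InKempeChainOn G S' g' a b v u := by
  induction h with
  | refl => exact .refl
  | tail _ h ih =>
    obtain ⟨hxy, hx, hy, hxab, hyab⟩ := h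
    exact ih.tail ⟨hxy, hS hx, hS hy, hg hx ▸ hxab, hg hy ▸ hyab⟩

theorem induce_iff {x y : S} :
    InKempeChainOn (G.induce S) Set.univ (fun z => g z) a b x y ↔
      InKempeChainOn G S g a b x y := by
  constructor
  · intro h
    induction h with
    | refl => exact .refl
    | @tail p q _ hpq ih => exact ih.tail ⟨hpq.1, p.2, q.2, hpq.2.2.2.1, hpq.2.2.2.2⟩
  · intro h
    suffices ∀ q, InKempeChainOn G S g a b x q → ∀ hq : q ∈ S,
        InKempeChainOn (G.induce S) Set.univ (fun z => g z) a b x ⟨q, hq⟩ from this y h y.2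
    intro q hq
    induction hq with
    | refl => exact fun _ => .refl
    | @tail p q _ hpq ih =>
      exact fun _ => (ih hpq.2.1).tail ⟨hpq.1, trivial, trivial, hpq.2.2.2.1, hpq.2.2.2.2⟩

end InKempeChainOn

namespace KempeStepOn

variable [DecidableEq C] {G : SimpleGraph V} {A B : Set V} {g g₁ h : V → C}

theorem properOn (hs : KempeStepOn G A g h) (hg : ProperOn G A g) : ProperOn G A h := by
  obtain ⟨a, b, v, -, hv, hon, hoff⟩ := hs
  intro x hx y hy hxy
  by_cases hcx : InKempeChainOn G A g a b v x <;> by_cases hcy : InKempeChainOn G A g a b v y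
  · rw [hon x hcx, hon y hcy]
    exact fun e => hg hx hy hxy ((Equiv.swap a b).injective e)
  · rw [hon x hcx, hoff y hcy]
    intro e
    exact hcy (hcx.tail ⟨hxy, hx, hy, hcx.color hv, e ▸ swap_apply_eq_or_eq (hcx.color hv)⟩)
  · rw [hoff x hcx, hon y hcy]
    intro e
    exact hcx (hcy.tail ⟨hxy.symm, hy, hx, hcy.color hv, e ▸ swap_apply_eq_or_eq (hcy.color hv)⟩)
  · rw [hoff x hcx, hoff y hcy]
    exact hg hx hy hxy

theorem apply_of_notMem (hs : KempeStepOn G A g h) {v : V} (hv : v ∉ A) : h v = g v := by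
  obtain ⟨a, b, w, hwA, -, -, hoff⟩ := hs
  exact hoff v fun hc => hv (hc.mem hwA)

theorem kempeStep (hs : KempeStepOn G Set.univ g h) : KempeStep G g h := by
  obtain ⟨a, b, v, -, hv, hon, hoff⟩ := hs
  exact ⟨a, b, v, hv, hon, hoff⟩

theorem exists_eqOn (hs : KempeStepOn G B g h) (hg : Set.EqOn g₁ g B) :
    ∃ h₁, KempeStepOn G B g₁ h₁ ∧ Set.EqOn h₁ h B := by
  classical
  obtain ⟨a, b, v, hvB, hv, hon, hoff⟩ := hs
  have hchain (u : V) : InKempeChainOn G B g₁ a b v u ↔ InKempeChainOn G B g a b v u :=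
    ⟨InKempeChainOn.mono le_rfl hg, InKempeChainOn.mono le_rfl hg.symm⟩
  refine ⟨fun u => if u ∈ B then h u else g₁ u,
    ⟨a, b, v, hvB, by rwa [hg hvB], fun u hu => ?_, fun u hu => ?_⟩, fun u hu => if_pos hu⟩
  · have huB := hu.mem hvB
    simp only [if_pos huB, hon u ((hchain u).1 hu), hg huB]
  · dsimp only
    split_ifs with huB
    · rw [hoff u (mt (hchain u).2 hu), hg huB]
    · rfl

theorem of_induce {S : Set V} {γ : S → C} (hs : KempeStep (G.induce S) (fun x => g x) γ) :
    ∃ h : V → C, KempeStepOn G S g h ∧ ∀ x : S, h x = γ x := by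
  classical
  obtain ⟨a, b, v, hv, hon, hoff⟩ := hs
  refine ⟨fun u => if hu : u ∈ S then γ ⟨u, hu⟩ else g u,
    ⟨a, b, v, v.2, hv, fun u hu => ?_, fun u hu => ?_⟩, fun x => dif_pos x.2⟩
  · have huS := hu.mem v.2
    simp only [dif_pos huS]
    exact hon ⟨u, huS⟩ (InKempeChainOn.induce_iff.2 hu)
  · dsimp only
    split_ifs with huS
    · exact hoff ⟨u, huS⟩ fun hc => hu (InKempeChainOn.induce_iff.1 hc)
    · rfl

end KempeStepOn

theorem kempeStepOn_update [DecidableEq V] [DecidableEq C] {G : SimpleGraph V} {A : Set V}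
    {g : V → C} {w : V} {c : C} (hg : ProperOn G A g) (hw : w ∈ A) (hc : c ≠ g w)
    (hfree : ∀ u ∈ A, G.Adj w u → g u ≠ c) : KempeStepOn G A g (Function.update g w c) := by
  have hchain (u : V) (hu : InKempeChainOn G A g (g w) c w u) : w = u :=
    (ReflTransGen.cases_head hu).resolve_right fun ⟨y, ⟨hwy, _, hy, _, hcy⟩, _⟩ =>
      hcy.elim (hg hw hy hwy ·.symm) (hfree y hy hwy)
  refine ⟨g w, c, w, hw, Or.inl rfl, fun u hu => ?_, fun u hu => ?_⟩
  · obtain rfl := hchain u hu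
    simp
  · exact Function.update_of_ne (by rintro rfl; exact hu .refl) _ _

theorem KempeEquivIn.mono [DecidableEq C] {G : SimpleGraph V} {P : (V → C) → Prop} {N N' : ℕ}
    {g h : V → C} (hN : N ≤ N') (hgh : KempeEquivIn G P N g h) : KempeEquivIn G P N' g h := by
  obtain ⟨m, f, hm, rest⟩ := hgh
  exact ⟨m, f, hm.trans hN, rest⟩

namespace KempeWalk

variable [DecidableEq C] {G : SimpleGraph V} {A : Set V} {g h h' : V → C} {c c' : V → ℕ}

theorem single (hs : KempeStepOn G A g h) : KempeWalk G A g h (changes g h) := by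
  simpa using refl.tail hs

theorem trans (hw : KempeWalk G A g h c) (hw' : KempeWalk G A h h' c') :
    KempeWalk G A g h' (c + c') := by
  induction hw' with
  | refl => simpa using hw
  | tail _ hs ih => rw [← add_assoc]; exact ih.tail hs

theorem properOn (hw : KempeWalk G A g h c) (hg : ProperOn G A g) : ProperOn G A h := by
  induction hw with
  | refl => exact hg
  | tail _ hs ih => exact hs.properOn ih

theorem count_eq_zero_of_notMem (hw : KempeWalk G A g h c) {v : V} (hv : v ∉ A) : c v = 0 := by
  induction hw with
  | refl => rfl
  | tail _ hs ih => simp [ih, changes_eq_zero.2 (hs.apply_of_notMem hv)]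

theorem apply_eq_of_count_eq_zero (hw : KempeWalk G A g h c) {v : V} (hv : c v = 0) :
    h v = g v := by
  induction hw with
  | refl => rfl
  | tail _ _ ih =>
    obtain ⟨hc, hch⟩ := Nat.add_eq_zero_iff.1 hv
    rw [changes_eq_zero.1 hch, ih hc]

theorem kempeEquivIn [Fintype V] (hw : KempeWalk G Set.univ g h c) (hg : IsProperColoring G g) :
    KempeEquivIn G (IsProperColoring G) (∑ v, c v) g h := by
  induction hw with
  | refl => exact ⟨0, fun _ => g, by simp, rfl, rfl, fun _ _ => hg, fun _ h => absurd h (by omega)⟩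
  | @tail h h' c hw hs ih =>
    obtain ⟨m, f, hm, hf0, hfm, hP, hf⟩ := ih
    have hsum : ∑ v, (c + changes h h') v = ∑ v, c v + ∑ v, changes h h' v :=
      Finset.sum_add_distrib
    by_cases hh : h' = h
    · subst hh
      exact ⟨m, f, by omega, hf0, hfm, hP, hf⟩
    obtain ⟨v, hv⟩ := Function.ne_iff.1 hh
    have hone : 1 ≤ ∑ v, changes h h' v :=
      (changes_eq_one hv).symm.le.trans (Finset.single_le_sum (fun _ _ => Nat.zero_le _)
        (Finset.mem_univ v))
    refine ⟨m + 1, fun s => if s ≤ m then f s else h', by omega, by simpa using hf0, by simp,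
      fun s hsm₁ => ?_, fun s hsm₁ => ?_⟩
    · by_cases hsm : s ≤ m
      · simpa [hsm] using hP s hsm
      · simpa [hsm] using properOn_univ.1 ((hw.tail hs).properOn (properOn_univ.2 hg))
    · by_cases hsm : s < m
      · simpa [hsm.le, Nat.succ_le_of_lt hsm] using hf s hsm
      · obtain rfl : s = m := by omega
        simpa [hfm] using hs.kempeStep

end KempeWalk

theorem exists_ne_forall_ne_of_ncard_lt [Finite V] {N : Set V} {g : V → C}
    (hN : N.ncard < Nat.card C) {y z : V} (hy : y ∈ N) (hz : z ∈ N) (hyz : y ≠ z)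
    (hgyz : g y = g z) (w : V) : ∃ c, c ≠ g w ∧ ∀ u ∈ N, g u ≠ c := by
  have hsub : g '' insert w N ⊆ g '' insert w (N \ {y}) := by
    rintro _ ⟨u, hu, rfl⟩
    by_cases huy : u = y
    · subst huy
      exact ⟨z, Or.inr ⟨hz, Ne.symm hyz⟩, hgyz.symm⟩
    · exact ⟨u, hu.imp id fun hu => ⟨hu, huy⟩, rfl⟩
  have hcard : (g '' insert w N).ncard < Nat.card C := calc
    _ ≤ (g '' insert w (N \ {y})).ncard := Set.ncard_le_ncard hsub
    _ ≤ (insert w (N \ {y})).ncard := Set.ncard_image_le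
    _ ≤ (N \ {y}).ncard + 1 := Set.ncard_insert_le _ _
    _ = N.ncard := Set.ncard_sdiff_singleton_add_one hy
    _ < Nat.card C := hN
  obtain ⟨c, hc⟩ : ∃ c, c ∉ g '' insert w N := by
    by_contra! h
    rw [Set.eq_univ_of_forall h, Set.ncard_univ] at hcard
    exact lt_irrefl _ hcard
  exact ⟨c, fun e => hc ⟨w, Set.mem_insert _ _, e.symm⟩,
    fun u hu e => hc ⟨u, Set.mem_insert_of_mem _ hu, e⟩⟩

/-- Through `w`, the `a`/`b`-Kempe chain of `K` in `G[A]` can continue to a vertex outside `K`. -/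
def IsBlocking (G : SimpleGraph V) (A B K : Set V) (a b : C) (g : V → C) (w : V) : Prop :=
  w ∈ A \ B ∧ (g w = a ∨ g w = b) ∧ (∃ x ∈ K, G.Adj w x) ∧
    ∃ y ∈ A \ K, G.Adj w y ∧ (g y = a ∨ g y = b)

theorem IsBlocking.of_apply_eq {G : SimpleGraph V} {A B K : Set V} {a b : C} {g g' : V → C}
    {w : V} (hg' : ∀ v, (g' v = a ∨ g' v = b) → g' v = g v)
    (hw : IsBlocking G A B K a b g' w) : IsBlocking G A B K a b g w := by
  obtain ⟨hwAB, hwab, hK, y, hy, hwy, hyab⟩ := hw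
  exact ⟨hwAB, hg' w hwab ▸ hwab, hK, y, hy, hwy, hg' y hyab ▸ hyab⟩

theorem InKempeChainOn.mem_or_of_forall_not_isBlocking {G : SimpleGraph V} {A B : Set V}
    {g δ : V → C} {a b : C} {v₀ u : V}
    (hv₀ : v₀ ∈ B) (hδg : Set.EqOn δ g B)
    (hδ : ∀ w, ¬IsBlocking G A B {x | InKempeChainOn G B g a b v₀ x} a b δ w)
    (hu : InKempeChainOn G A δ a b v₀ u) :
    InKempeChainOn G B g a b v₀ u ∨
      (u ∈ A \ B ∧ ∃ x, InKempeChainOn G B g a b v₀ x ∧ G.Adj u x) := by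
  induction hu with
  | refl => exact Or.inl .refl
  | @tail x y _ hxy ih =>
    obtain ⟨hadj, -, hyA, hxab, hyab⟩ := hxy
    rcases ih with hx | ⟨hxAB, z, hz, hxz⟩
    · by_cases hyB : y ∈ B
      · exact Or.inl (hx.tail ⟨hadj, hx.mem hv₀, hyB, hδg (hx.mem hv₀) ▸ hxab, hδg hyB ▸ hyab⟩)
      · exact Or.inr ⟨⟨hyA, hyB⟩, x, hx, hadj.symm⟩
    · left
      by_contra hy
      exact hδ x ⟨hxAB, hxab, ⟨z, hz, hxz⟩, y, ⟨hyA, hy⟩, hadj, hyab⟩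

theorem exists_kempeStepOn_of_forall_not_isBlocking [DecidableEq C] {G : SimpleGraph V}
    {A B : Set V} (hBA : B ⊆ A) {g δ h : V → C} {a b : C} {v₀ : V} (hv₀B : v₀ ∈ B)
    (hv₀ : g v₀ = a ∨ g v₀ = b)
    (hon : ∀ u, InKempeChainOn G B g a b v₀ u → h u = Equiv.swap a b (g u))
    (hoff : ∀ u, ¬InKempeChainOn G B g a b v₀ u → h u = g u) (hδg : Set.EqOn δ g B)
    (hδ : ∀ w, ¬IsBlocking G A B {x | InKempeChainOn G B g a b v₀ x} a b δ w) :
    ∃ h₂, KempeStepOn G A δ h₂ ∧ Set.EqOn h₂ h B ∧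
      ∀ w ∉ B, h₂ w ≠ δ w → ∃ x, InKempeChainOn G B g a b v₀ x ∧ G.Adj w x := by
  classical
  set T := {u | InKempeChainOn G A δ a b v₀ u}
  have hTK (u : V) (hu : u ∈ B) : u ∈ T ↔ InKempeChainOn G B g a b v₀ u :=
    ⟨fun hT => (InKempeChainOn.mem_or_of_forall_not_isBlocking hv₀B hδg hδ hT).resolve_right
      fun h => h.1.2 hu, InKempeChainOn.mono hBA hδg.symm⟩
  refine ⟨fun u => if u ∈ T then Equiv.swap a b (δ u) else δ u,
    ⟨a, b, v₀, hBA hv₀B, by rwa [hδg hv₀B], fun u hu => if_pos hu, fun u hu => if_neg hu⟩,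
    fun u hu => ?_, fun w hwB hw => ?_⟩
  · by_cases hK : InKempeChainOn G B g a b v₀ u
    · simp [(hTK u hu).2 hK, hon u hK, hδg hu]
    · simp [mt (hTK u hu).1 hK, hoff u hK, hδg hu]
  · have hwT : w ∈ T := by
      by_contra hwT
      exact hw (if_neg hwT)
    rcases InKempeChainOn.mem_or_of_forall_not_isBlocking hv₀B hδg hδ hwT with hK | ⟨-, hK⟩
    · exact absurd (hK.mem hv₀B) hwB
    · exact hK

section Lift

variable [DecidableEq C] [Finite V] {G : SimpleGraph V} {A B : Set V}

theorem IsBlocking.exists_kempeStepOn_update [DecidableEq V] (hBA : B ⊆ A)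
    (hdeg : ∀ w ∈ A \ B, (A ∩ G.neighborSet w).ncard < Nat.card C) {K : Set V} (hKB : K ⊆ B)
    {a b : C} {g : V → C} (hg : ProperOn G A g) (hK : ∀ x ∈ K, g x = a ∨ g x = b) {w : V}
    (hw : IsBlocking G A B K a b g w) :
    ∃ c, ¬(c = a ∨ c = b) ∧ KempeStepOn G A g (Function.update g w c) := by
  obtain ⟨⟨hwA, hwB⟩, hwab, ⟨x, hxK, hwx⟩, y, ⟨hyA, hyK⟩, hwy, hyab⟩ := hw
  have hxA := hBA (hKB hxK)
  have hgx : g w ≠ g x := hg hwA hxA hwx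
  -- `y` and `x` are both colored by the color of `{a, b}` other than `g w`
  have hgy : g y = g x :=
    (eq_or_eq_of_pair hwab (hK x hxK) hyab hgx).resolve_left (hg hwA hyA hwy).symm
  obtain ⟨c, hcw, hc⟩ := exists_ne_forall_ne_of_ncard_lt (hdeg w ⟨hwA, hwB⟩) ⟨hyA, hwy⟩
    ⟨hxA, hwx⟩ (by rintro rfl; exact hyK hxK) hgy w
  refine ⟨c, fun hcab => ?_, kempeStepOn_update hg hwA hcw fun u hu hwu => hc u ⟨hu, hwu⟩⟩
  exact (eq_or_eq_of_pair hwab (hK x hxK) hcab hgx).elim hcw (hc x ⟨hxA, hwx⟩ ·.symm)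

theorem exists_kempeWalk_forall_not_isBlocking (hBA : B ⊆ A)
    (hdeg : ∀ w ∈ A \ B, (A ∩ G.neighborSet w).ncard < Nat.card C) {K : Set V} (hKB : K ⊆ B)
    {a b : C} (g : V → C) (hg : ProperOn G A g) (hK : ∀ x ∈ K, g x = a ∨ g x = b) :
    ∃ δ c, KempeWalk G A g δ c ∧ (∀ v, (δ v = a ∨ δ v = b) → δ v = g v) ∧
      (∀ v, c v ≤ 1 ∧ (c v ≠ 0 → IsBlocking G A B K a b g v)) ∧
      ∀ w, ¬IsBlocking G A B K a b δ w := by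
  classical
  by_cases hblock : ∃ w, IsBlocking G A B K a b g w
  swap
  · exact ⟨g, 0, .refl, fun _ _ => rfl, fun _ => ⟨zero_le_one, fun h => absurd rfl h⟩,
      not_exists.1 hblock⟩
  obtain ⟨w, hw⟩ := hblock
  obtain ⟨c, hcab, hs⟩ := hw.exists_kempeStepOn_update hBA hdeg hKB hg hK
  set g₁ := Function.update g w c
  have hg₁ (v : V) (hv : g₁ v = a ∨ g₁ v = b) : g₁ v = g v := by
    by_cases hvw : v = w
    · subst hvw
      simp only [g₁, Function.update_self] at hv
      exact absurd hv hcab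
    · exact Function.update_of_ne hvw _ _
  have hw₁ : ¬IsBlocking G A B K a b g₁ w := fun h => hcab (by simpa [g₁] using h.2.1)
  have hlt : {v | IsBlocking G A B K a b g₁ v}.ncard < {v | IsBlocking G A B K a b g v}.ncard :=
    Set.ncard_lt_ncard ⟨fun v hv => hv.of_apply_eq hg₁, fun h => hw₁ (h hw)⟩
  obtain ⟨δ, c', hwalk, hδ, hc', hδblock⟩ :=
    exists_kempeWalk_forall_not_isBlocking (a := a) (b := b) hBA hdeg hKB g₁ (hs.properOn hg)
      fun u hu => by
        have hu' : g₁ u = g u := Function.update_of_ne (by rintro rfl; exact hw.1.2 (hKB hu)) _ _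
        rw [hu']
        exact hK u hu
  refine ⟨δ, changes g g₁ + c', (KempeWalk.single hs).trans hwalk,
    fun v hv => (hδ v hv).trans (hg₁ v (hδ v hv ▸ hv)), fun v => ?_, hδblock⟩
  by_cases hvw : v = w
  · subst hvw
    have : c' v = 0 := by_contra fun h => hw₁ ((hc' v).2 h)
    simp only [Pi.add_apply, this, add_zero]
    exact ⟨changes_le_one, fun _ => hw⟩
  · have : changes g g₁ v = 0 := changes_eq_zero.2 (Function.update_of_ne hvw _ _)
    simp only [Pi.add_apply, this, zero_add]
    exact ⟨(hc' v).1, fun h => ((hc' v).2 h).of_apply_eq hg₁⟩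
termination_by {v | IsBlocking G A B K a b g v}.ncard

theorem KempeStepOn.exists_kempeWalk (hBA : B ⊆ A)
    (hdeg : ∀ w ∈ A \ B, (A ∩ G.neighborSet w).ncard < Nat.card C) {g h : V → C}
    (hg : ProperOn G A g) (hs : KempeStepOn G B g h) :
    ∃ h' c, KempeWalk G A g h' c ∧ Set.EqOn h' h B ∧ Set.EqOn c (changes g h) B ∧
      ∀ w ∉ B, c w ≤ 2 * ∑ x ∈ (Set.toFinite (B ∩ G.neighborSet w)).toFinset, changes g h x := by
  by_cases hhg : h = g
  · subst hhg
    exact ⟨h, 0, .refl, fun _ _ => rfl, fun _ _ => by simp [changes], fun _ _ => Nat.zero_le _⟩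
  obtain ⟨a, b, v₀, hv₀B, hv₀, hon, hoff⟩ := hs
  set K := {u | InKempeChainOn G B g a b v₀ u}
  have hKB : K ⊆ B := fun u hu => hu.mem hv₀B
  have hKab (x : V) (hx : x ∈ K) : g x = a ∨ g x = b := hx.color hv₀
  have hab : a ≠ b := by
    rintro rfl
    refine hhg (funext fun u => ?_)
    by_cases hu : u ∈ K
    · rw [hon u hu, Equiv.swap_self, Equiv.refl_apply]
    · exact hoff u hu
  have hKh (x : V) (hx : x ∈ K) : h x ≠ g x := by
    rw [hon x hx]
    exact Equiv.swap_apply_ne_self_iff.2 ⟨hab, hKab x hx⟩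
  obtain ⟨δ, c₁, hw₁, -, hc₁, hδ⟩ := exists_kempeWalk_forall_not_isBlocking hBA hdeg hKB g hg hKab
  have hc₁B (u : V) (hu : u ∈ B) : c₁ u = 0 := by_contra fun h => ((hc₁ u).2 h).1.2 hu
  have hδg : Set.EqOn δ g B := fun u hu => hw₁.apply_eq_of_count_eq_zero (hc₁B u hu)
  obtain ⟨h₂, hs₂, hh₂, hh₂K⟩ :=
    exists_kempeStepOn_of_forall_not_isBlocking hBA hv₀B hv₀ hon hoff hδg hδ
  refine ⟨h₂, c₁ + changes δ h₂, hw₁.trans (.single hs₂), hh₂,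
    fun u hu => by simp [changes, hc₁B u hu, hδg hu, hh₂ hu],
    fun w hwB => le_two_mul_sum_changes ?_ fun hw => ?_⟩
  · have := (hc₁ w).1
    have : changes δ h₂ w ≤ 1 := changes_le_one
    simp only [Pi.add_apply]
    omega
  obtain ⟨x, hxK, hwx⟩ : ∃ x ∈ K, G.Adj w x := by
    by_cases hc : c₁ w = 0
    · exact hh₂K w hwB fun h => hw (by simp [hc, changes, h])
    · exact ((hc₁ w).2 hc).2.2.1
  exact ⟨x, (Set.toFinite _).mem_toFinset.2 ⟨hKB hxK, hwx⟩, hKh x hxK⟩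

theorem KempeWalk.lift (hBA : B ⊆ A)
    (hdeg : ∀ w ∈ A \ B, (A ∩ G.neighborSet w).ncard < Nat.card C) {g h : V → C} {c : V → ℕ}
    (hw : KempeWalk G B g h c) (hg : ProperOn G A g) :
    ∃ h' c', KempeWalk G A g h' c' ∧ Set.EqOn h' h B ∧ (∀ u ∈ B, c' u ≤ c u) ∧
      ∀ w ∉ B, c' w ≤ 2 * ∑ x ∈ (Set.toFinite (B ∩ G.neighborSet w)).toFinset, c x := by
  induction hw with
  | refl => exact ⟨g, 0, .refl, fun _ _ => rfl, fun _ _ => Nat.zero_le _, fun _ _ => Nat.zero_le _⟩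
  | @tail h h' c _ hs ih =>
    obtain ⟨h₁, c₁, hw₁, hh₁, hc₁B, hc₁⟩ := ih
    obtain ⟨h₂, hs₂, hh₂⟩ := hs.exists_eqOn hh₁
    obtain ⟨h₃, c₂, hw₂, hh₃, hc₂B, hc₂⟩ := hs₂.exists_kempeWalk hBA hdeg (hw₁.properOn hg)
    have hch : Set.EqOn (changes h₁ h₂) (changes h h') B := fun u hu => by
      simp [changes, hh₁ hu, hh₂ hu]
    refine ⟨h₃, c₁ + c₂, hw₁.trans hw₂, hh₃.trans hh₂, fun u hu => ?_, fun w hw => ?_⟩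
    · simp only [Pi.add_apply, hc₂B hu, hch hu]
      exact Nat.add_le_add_right (hc₁B u hu) _
    · calc c₁ w + c₂ w
          ≤ 2 * ∑ x ∈ (Set.toFinite (B ∩ G.neighborSet w)).toFinset, c x +
            2 * ∑ x ∈ (Set.toFinite (B ∩ G.neighborSet w)).toFinset, changes h₁ h₂ x :=
          add_le_add (hc₁ w hw) (hc₂ w hw)
        _ = 2 * ∑ x ∈ (Set.toFinite (B ∩ G.neighborSet w)).toFinset, (c + changes h h') x := by
          rw [← mul_add, ← Finset.sum_add_distrib]
          exact congrArg _ (Finset.sum_congr rfl fun x hx =>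
            congrArg _ (hch ((Set.toFinite _).mem_toFinset.1 hx).1))

end Lift

theorem exists_kempeWalk_of_layering [DecidableEq C] [Finite V] {G : SimpleGraph V} {lvl : V → ℕ}
    (hdeg : ∀ v, {u | G.Adj v u ∧ lvl v ≤ lvl u}.ncard < Nat.card C) {g h : V → C}
    (hg : IsProperColoring G g) {i : ℕ} (hs : KempeStepOn G {v | i ≤ lvl v} g h) {j : ℕ}
    (hj : j ≤ i) :
    ∃ β c, KempeWalk G {v | j ≤ lvl v} g β c ∧ Set.EqOn β h {v | i ≤ lvl v} ∧
      ∀ v, c v ≤ (2 * Nat.card C) ^ (i - j) := by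
  induction hj using Nat.decreasingInduction with
  | self => exact ⟨h, _, .single hs, fun _ _ => rfl, fun v => by simpa using changes_le_one⟩
  | of_succ j hji ih =>
    obtain ⟨β, c, hw, hβ, hc⟩ := ih
    have hdeg' : ∀ w ∈ {v | j ≤ lvl v} \ {v | j + 1 ≤ lvl v},
        ({v | j ≤ lvl v} ∩ G.neighborSet w).ncard < Nat.card C := by
      rintro w ⟨hjw, hw⟩
      convert hdeg w using 3
      have hlw : lvl w = j := by
        simp only [Set.mem_ofPred_eq] at hjw hw
        omega
      ext u
      simp only [Set.mem_inter_iff, Set.mem_ofPred_eq, SimpleGraph.mem_neighborSet, hlw]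
      exact and_comm
    obtain ⟨β', c', hw', hβ', hc'B, hc'⟩ :=
      hw.lift (fun v hv => Nat.le_of_succ_le hv) hdeg' fun u _ v _ huv => hg huv
    have hsucc : i - j = i - (j + 1) + 1 := by omega
    refine ⟨β', c', hw', fun v hv => (hβ' (show j + 1 ≤ lvl v from hji.trans_le hv)).trans (hβ hv),
      fun v => ?_⟩
    by_cases hvB : j + 1 ≤ lvl v
    · exact (hc'B v hvB).trans ((hc v).trans (Nat.pow_le_pow_right (by have := hdeg v; omega)
        (by omega)))
    by_cases hvA : j ≤ lvl v
    swap
    · simp [hw'.count_eq_zero_of_notMem hvA]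
    have hcard : (Set.toFinite ({u | j + 1 ≤ lvl u} ∩ G.neighborSet v)).toFinset.card ≤
        Nat.card C := by
      rw [← Set.ncard_eq_toFinset_card]
      exact ((Set.ncard_le_ncard (Set.inter_subset_inter_left _ fun u hu => Nat.le_of_succ_le hu))
        |>.trans_lt (hdeg' v ⟨hvA, hvB⟩)).le
    calc c' v
        ≤ 2 * ∑ x ∈ (Set.toFinite ({u | j + 1 ≤ lvl u} ∩ G.neighborSet v)).toFinset, c x :=
          hc' v hvB
      _ ≤ 2 * ((Set.toFinite ({u | j + 1 ≤ lvl u} ∩ G.neighborSet v)).toFinset.card *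
            (2 * Nat.card C) ^ (i - (j + 1))) := by
          gcongr
          simpa using Finset.sum_le_card_nsmul _ _ _ fun x _ => hc x
      _ ≤ 2 * (Nat.card C * (2 * Nat.card C) ^ (i - (j + 1))) := by gcongr
      _ = (2 * Nat.card C) ^ (i - j) := by rw [hsucc, pow_succ]; ring

theorem statement_8 (n t k : ℕ) (G : SimpleGraph (Fin n)) (lvl : Fin n → Fin t)
    (hlayer : ∀ v : Fin n, {u : Fin n | G.Adj v u ∧ lvl v ≤ lvl u}.ncard ≤ k - 1)
    (α : Fin n → Fin k) (hα : IsProperColoring G α)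
    (i : Fin t) (γ : {v : Fin n | i ≤ lvl v} → Fin k)
    (hγ : KempeStep (G.induce {v : Fin n | i ≤ lvl v}) (fun x => α x.1) γ) :
    ∃ β : Fin n → Fin k,
      KempeEquivIn G (IsProperColoring G) (n ^ 2 * (2 * k) ^ t) α β ∧
      ∀ x : {v : Fin n | i ≤ lvl v}, β x.1 = γ x := by
  obtain ⟨h, hs, hhγ⟩ := KempeStepOn.of_induce hγ
  have hdeg (v : Fin n) : {u | G.Adj v u ∧ (lvl v : ℕ) ≤ lvl u}.ncard < Nat.card (Fin k) := by
    have hv : {u | G.Adj v u ∧ (lvl v : ℕ) ≤ lvl u}.ncard ≤ k - 1 := hlayer v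
    have := (α v).pos
    rw [Nat.card_fin]
    omega
  obtain ⟨β, c, hw, hβ, hc⟩ :=
    exists_kempeWalk_of_layering (lvl := fun v => (lvl v : ℕ)) hdeg hα hs (Nat.zero_le i)
  rw [show {v | 0 ≤ (lvl v : ℕ)} = Set.univ from Set.eq_univ_of_forall fun v => Nat.zero_le _]
    at hw
  refine ⟨β, (hw.kempeEquivIn hα).mono ?_, fun x => (hβ x.2).trans (hhγ x)⟩
  calc ∑ v, c v
      ≤ ∑ _v : Fin n, (2 * k) ^ t := Finset.sum_le_sum fun v _ => (hc v).trans <| by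
        rw [Nat.card_fin]
        exact Nat.pow_le_pow_right (by have := (α v).pos; omega) (by omega)
    _ = n * (2 * k) ^ t := by simp
    _ ≤ n ^ 2 * (2 * k) ^ t := by gcongr; exact Nat.le_self_pow two_ne_zero n
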